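/- arXiv:2301.00405 — 6 statements merged into one kernel-verified Lean document; each statement's English description precedes it below -/
import Mathlib

section
/- Let d(n) denote the number of Dyck paths of semilength n that never rise above height 3 (i.e., lattice paths from (0,0) to (2n,0) with steps (1,1) and (1,-1) staying between heights 0 and 3). Then d(n) = F(2n-1) for all n ≥ 1, where F is the Fibonacci sequence with F(1) = F(2) = 1. -/
-- The height of the lattice path encoded by `f : Fin (2*n) → Bool` (`true` = up step `(1,1)`,
-- `false` = down step `(1,-1)`) after the first `j` steps.
open Classical in
noncomputable def dyckHeight (n : ℕ) (f : Fin (2 * n) → Bool) (j : ℕ) : ℤ :=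
  ((Finset.univ.filter (fun i : Fin (2 * n) => (i : ℕ) < j ∧ f i)).card : ℤ)
    - ((Finset.univ.filter (fun i : Fin (2 * n) => (i : ℕ) < j ∧ ¬ f i)).card : ℤ)

-- The number of Dyck paths of semilength `n` staying between heights `0` and `3`:
-- paths of `2n` steps `(1,1)`/`(1,-1)` from `(0,0)` to `(2n,0)` with all intermediate
-- heights in `[0,3]`.
open Classical in
noncomputable def boundedDyckCount (n : ℕ) : ℕ :=
  (Finset.univ.filter (fun f : Fin (2 * n) → Bool =>
    dyckHeight n f (2 * n) = 0 ∧
    ∀ j ≤ 2 * n, 0 ≤ dyckHeight n f j ∧ dyckHeight n f j ≤ 3)).card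

namespace BddDyck

def sgn (b : Bool) : ℤ := if b then 1 else -1

noncomputable def H (m : ℕ) (f : Fin m → Bool) (j : ℕ) : ℤ :=
  ∑ i : Fin m, if (i : ℕ) < j then sgn (f i) else 0

def Valid (m : ℕ) (f : Fin m → Bool) (h : ℤ) : Prop :=
  H m f m = h ∧ ∀ j ≤ m, 0 ≤ H m f j ∧ H m f j ≤ 3

open Classical in
noncomputable def W (m : ℕ) (h : ℤ) : ℕ :=
  (Finset.univ.filter (fun f : Fin m → Bool => Valid m f h)).card

lemma dyck_eq (n : ℕ) (f : Fin (2 * n) → Bool) (j : ℕ) :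
    dyckHeight n f j = H (2 * n) f j := by
  classical
  unfold dyckHeight H
  rw [Finset.card_filter, Finset.card_filter]
  push_cast
  rw [← Finset.sum_sub_distrib]
  refine Finset.sum_congr rfl fun i _ => ?_
  by_cases hj : (i : ℕ) < j <;> cases hfi : f i <;> simp [hj, hfi, sgn]

lemma H_snoc_le (m : ℕ) (f : Fin m → Bool) (b : Bool) {j : ℕ} (hj : j ≤ m) :
    H (m + 1) (Fin.snoc f b) j = H m f j := by
  unfold H
  rw [Fin.sum_univ_castSucc]
  have hlast : ¬ ((Fin.last m : ℕ) < j) := by simp [Fin.last]; omega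
  simp only [Fin.snoc_castSucc, Fin.coe_castSucc, hlast, if_false, add_zero]

lemma H_snoc_last (m : ℕ) (f : Fin m → Bool) (b : Bool) :
    H (m + 1) (Fin.snoc f b) (m + 1) = H m f m + sgn b := by
  unfold H
  rw [Fin.sum_univ_castSucc]
  simp only [Fin.snoc_castSucc, Fin.coe_castSucc, Fin.snoc_last, Fin.val_last,
    Nat.lt_succ_self, if_true]
  congr 1
  refine Finset.sum_congr rfl fun i _ => ?_
  simp [Nat.lt_succ_of_lt i.isLt, i.isLt]

lemma valid_snoc (m : ℕ) (f : Fin m → Bool) (b : Bool) (h : ℤ) :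
    Valid (m + 1) (Fin.snoc f b) h ↔ Valid m f (h - sgn b) ∧ 0 ≤ h ∧ h ≤ 3 := by
  constructor
  · rintro ⟨hfin, hbd⟩
    rw [H_snoc_last] at hfin
    refine ⟨⟨by omega, fun j hj => ?_⟩, ?_⟩
    · have := hbd j (by omega)
      rwa [H_snoc_le m f b hj] at this
    · have := hbd (m + 1) le_rfl
      rw [H_snoc_last] at this
      omega
  · rintro ⟨⟨hfin, hbd⟩, h0, h3⟩
    constructor
    · rw [H_snoc_last]; omega
    · intro j hj
      rcases Nat.lt_or_ge j (m + 1) with hj' | hj'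
      · rw [H_snoc_le m f b (by omega)]
        exact hbd j (by omega)
      · have : j = m + 1 := by omega
        subst this
        rw [H_snoc_last]
        omega

lemma W_out (m : ℕ) (h : ℤ) (hh : ¬ (0 ≤ h ∧ h ≤ 3)) : W m h = 0 := by
  classical
  unfold W
  rw [Finset.card_eq_zero, Finset.filter_eq_empty_iff]
  rintro f - ⟨hfin, hbd⟩
  have := hbd m le_rfl
  rw [hfin] at this
  exact hh this

lemma W_zero (h : ℤ) : W 0 h = if h = 0 then 1 else 0 := by
  classical
  unfold W
  have hH : ∀ (f : Fin 0 → Bool) (j : ℕ), H 0 f j = 0 := by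
    intro f j; unfold H; simp
  by_cases hh : h = 0
  · subst hh
    rw [Finset.filter_true_of_mem, if_pos rfl]
    · simp
    · intro f _
      exact ⟨hH f 0, fun j _ => by rw [hH]; norm_num⟩
  · rw [if_neg hh, Finset.card_eq_zero, Finset.filter_eq_empty_iff]
    rintro f - ⟨hfin, -⟩
    rw [hH] at hfin
    exact hh hfin.symm

open Classical in
lemma card_step (m : ℕ) (b : Bool) (h : ℤ) (hh : 0 ≤ h ∧ h ≤ 3) :
    (Finset.univ.filter (fun g : Fin (m + 1) → Bool =>
      Valid (m + 1) g h ∧ g (Fin.last m) = b)).card = W m (h - sgn b) := by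
  unfold W
  refine Finset.card_bij' (fun g _ => g ∘ Fin.castSucc) (fun f _ => Fin.snoc f b)
    ?_ ?_ ?_ ?_
  · intro g hg
    rw [Finset.mem_filter] at hg ⊢
    obtain ⟨-, hv, hb⟩ := hg
    have hgsnoc : Fin.snoc (g ∘ Fin.castSucc) b = g := by
      rw [← hb]; exact Fin.snoc_init_self g
    rw [← hgsnoc, valid_snoc] at hv
    exact ⟨Finset.mem_univ _, hv.1⟩
  · intro f hf
    rw [Finset.mem_filter] at hf ⊢
    refine ⟨Finset.mem_univ _, ?_, by simp⟩
    show Valid (m + 1) (Fin.snoc f b) h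
    rw [valid_snoc]
    exact ⟨hf.2, hh⟩
  · intro g hg
    rw [Finset.mem_filter] at hg
    show Fin.snoc (g ∘ Fin.castSucc) b = g
    rw [← hg.2.2]
    exact Fin.snoc_init_self g
  · intro f _
    show (Fin.snoc f b) ∘ Fin.castSucc = f
    funext i
    simp

open Classical in
lemma W_succ (m : ℕ) (h : ℤ) (hh : 0 ≤ h ∧ h ≤ 3) :
    W (m + 1) h = W m (h - 1) + W m (h + 1) := by
  have ht := card_step m true h hh
  have hf := card_step m false h hh
  simp only [sgn, if_true, if_false, sub_neg_eq_add] at ht hf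
  norm_num at hf
  have key := Finset.card_filter_add_card_filter_not
    (s := Finset.univ.filter (fun g : Fin (m + 1) → Bool => Valid (m + 1) g h))
    (p := fun g => g (Fin.last m) = true)
  rw [Finset.filter_filter, Finset.filter_filter] at key
  have hfeq : (Finset.univ.filter fun g : Fin (m + 1) → Bool =>
      Valid (m + 1) g h ∧ ¬ g (Fin.last m) = true) =
      Finset.univ.filter fun g : Fin (m + 1) → Bool =>
      Valid (m + 1) g h ∧ g (Fin.last m) = false := by
    apply Finset.filter_congr
    intro g _
    simp
  rw [hfeq] at key
  unfold W at ht hf ⊢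
  rw [← key, ht, hf]

lemma W_even (k : ℕ) : W (2 * k + 2) 0 = Nat.fib (2 * k + 1) ∧
    W (2 * k + 2) 2 = Nat.fib (2 * k + 2) := by
  induction k with
  | zero =>
    have e0 : W 1 1 = 1 := by
      rw [show (1 : ℕ) = 0 + 1 from rfl, W_succ 0 1 (by norm_num), W_zero, W_zero]
      norm_num
    have e1 : W 1 3 = 0 := by
      rw [show (1 : ℕ) = 0 + 1 from rfl, W_succ 0 3 (by norm_num), W_zero, W_zero]
      norm_num
    have e2 : W 1 (-1) = 0 := W_out 1 (-1) (by norm_num)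
    constructor
    · rw [show 2 * 0 + 2 = 1 + 1 from rfl, W_succ 1 0 (by norm_num)]
      rw [show (0 : ℤ) - 1 = -1 from by ring, show (0 : ℤ) + 1 = 1 from by ring, e2, e0]
      decide
    · rw [show 2 * 0 + 2 = 1 + 1 from rfl, W_succ 1 2 (by norm_num)]
      rw [show (2 : ℤ) - 1 = 1 from by ring, show (2 : ℤ) + 1 = 3 from by ring, e0, e1]
      decide
  | succ k ih =>
    obtain ⟨ih0, ih2⟩ := ih
    have o1 : W (2 * k + 3) 1 = Nat.fib (2 * k + 1) + Nat.fib (2 * k + 2) := by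
      rw [show 2 * k + 3 = (2 * k + 2) + 1 from rfl, W_succ _ 1 (by norm_num)]
      rw [show (1 : ℤ) - 1 = 0 from by ring, show (1 : ℤ) + 1 = 2 from by ring, ih0, ih2]
    have o3 : W (2 * k + 3) 3 = Nat.fib (2 * k + 2) := by
      rw [show 2 * k + 3 = (2 * k + 2) + 1 from rfl, W_succ _ 3 (by norm_num)]
      rw [show (3 : ℤ) - 1 = 2 from by ring, show (3 : ℤ) + 1 = 4 from by ring, ih2,
        W_out _ 4 (by norm_num)]
      omega
    have om1 : W (2 * k + 3) (-1) = 0 := W_out _ (-1) (by norm_num)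
    have f3 : Nat.fib (2 * k + 3) = Nat.fib (2 * k + 1) + Nat.fib (2 * k + 2) :=
      Nat.fib_add_two
    have f4 : Nat.fib (2 * k + 4) = Nat.fib (2 * k + 2) + Nat.fib (2 * k + 3) :=
      Nat.fib_add_two
    constructor
    · rw [show 2 * (k + 1) + 2 = (2 * k + 3) + 1 from by ring, W_succ _ 0 (by norm_num)]
      rw [show (0 : ℤ) - 1 = -1 from by ring, show (0 : ℤ) + 1 = 1 from by ring, om1, o1]
      rw [show 2 * (k + 1) + 1 = 2 * k + 3 from by ring, f3]
      omega
    · rw [show 2 * (k + 1) + 2 = (2 * k + 3) + 1 from by ring, W_succ _ 2 (by norm_num)]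
      rw [show (2 : ℤ) - 1 = 1 from by ring, show (2 : ℤ) + 1 = 3 from by ring, o1, o3]
      rw [show 2 * k + 3 + 1 = 2 * k + 4 from by ring, f4, f3]
      omega

end BddDyck

/-- The number of `3`-bounded Dyck paths of semilength `n ≥ 1` is the
Fibonacci number `F(2n-1)` (with `F 1 = F 2 = 1`). -/
theorem boundedDyckCount_eq_fib : ∀ n : ℕ, 1 ≤ n → boundedDyckCount n = Nat.fib (2 * n - 1) := by
  intro n hn
  obtain ⟨k, rfl⟩ : ∃ k, n = k + 1 := ⟨n - 1, by omega⟩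
  have hconn : boundedDyckCount (k + 1) = BddDyck.W (2 * (k + 1)) 0 := by
    classical
    unfold boundedDyckCount BddDyck.W
    apply congrArg
    apply Finset.filter_congr
    intro f _
    simp only [BddDyck.dyck_eq, BddDyck.Valid]
  rw [hconn, show 2 * (k + 1) = 2 * k + 2 from by ring, (BddDyck.W_even k).1]
  congr 1
end

section
/- For any homogeneous symmetric function f of degree m (over ℚ) and any z ∈ ℂ^k, the function n ↦ f(z^n) (evaluation of f at the tuple z repeated n times, remaining variables set to 0) is a polynomial in n of degree at most m, and the value of this polynomial at -n equals (-1)^m times (ωf)(z^n), where ω is the canonical involution on symmetric functions sending the elementary symmetric function e_r to the complete homogeneous symmetric function h_r. -/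
/-- Evaluation of the power sum symmetric function `p_λ` indexed by a partition
`λ ⊢ m` at the tuple of complex numbers given by the list `w`:
`p_λ(w) = ∏_{r ∈ λ} (∑_i wᵢ^r)`. -/
noncomputable def pPartitionEval {m : ℕ} (lam : Nat.Partition m) (w : List ℂ) : ℂ :=
  (lam.parts.map (fun r => (w.map (· ^ r)).sum)).prod

lemma sum_pow_replicate (n : ℕ) (z : List ℂ) (r : ℕ) :
    ((List.flatten (List.replicate n z)).map (· ^ r)).sum
      = (n : ℂ) * ((z.map (· ^ r)).sum) := by
  induction n with
  | zero => simp
  | succ n ih =>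
    simp only [List.replicate_succ, List.flatten_cons, List.map_append, List.sum_append, ih,
      Nat.cast_succ]
    ring

lemma pPartitionEval_replicate {m : ℕ} (lam : Nat.Partition m) (n : ℕ) (z : List ℂ) :
    pPartitionEval lam (List.flatten (List.replicate n z))
      = (n : ℂ) ^ (Multiset.card lam.parts) * pPartitionEval lam z := by
  unfold pPartitionEval
  simp only [sum_pow_replicate]
  rw [show (fun r => (n : ℂ) * ((z.map (· ^ r)).sum))
      = fun r => (n : ℂ) * (fun r => (z.map (· ^ r)).sum) r from rfl]
  rw [Multiset.prod_map_mul]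
  congr 1
  simp [Multiset.map_const', Multiset.prod_replicate]

lemma card_le_of_partition {m : ℕ} (lam : Nat.Partition m) :
    Multiset.card lam.parts ≤ m := by
  calc Multiset.card lam.parts = (lam.parts.map (fun _ => 1)).sum := by simp
    _ ≤ (lam.parts.map id).sum :=
        Multiset.sum_map_le_sum_map _ _ (fun x hx => lam.parts_pos hx)
    _ = lam.parts.sum := by simp
    _ = m := lam.parts_sum

/-- Let `f` be a homogeneous symmetric function of degree `m` over `ℚ`,
written (uniquely) in the power sum basis as `f = ∑_{λ ⊢ m} c_λ p_λ`, and let `z ∈ ℂ^k`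
(given as a list). Then `n ↦ f(z^n)` is a polynomial in `n` of degree at most `m`, and
its value at `-n` is `(-1)^m (ωf)(z^n)`, where `ω p_λ = (-1)^{|λ| - ℓ(λ)} p_λ` is the
canonical involution (with `ω e_r = h_r`). -/
theorem symmFun_repeat_reciprocity (m : ℕ) (c : Nat.Partition m → ℚ) (z : List ℂ) :
    ∃ Pf : Polynomial ℂ, Pf.degree ≤ (m : WithBot ℕ) ∧
      (∀ n : ℕ, Pf.eval (n : ℂ)
        = ∑ lam : Nat.Partition m,
            (c lam : ℂ) * pPartitionEval lam (List.flatten (List.replicate n z))) ∧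
      (∀ n : ℕ, Pf.eval (-(n : ℂ))
        = (-1 : ℂ) ^ m *
          ∑ lam : Nat.Partition m,
            (c lam : ℂ) * (-1 : ℂ) ^ (m - Multiset.card lam.parts) *
              pPartitionEval lam (List.flatten (List.replicate n z))) := by
  classical
  refine ⟨∑ lam : Nat.Partition m,
      Polynomial.C ((c lam : ℂ) * pPartitionEval lam z) *
        Polynomial.X ^ (Multiset.card lam.parts), ?_, ?_, ?_⟩
  · refine (Polynomial.degree_sum_le _ _).trans ?_
    refine Finset.sup_le fun lam _ => ?_
    refine (Polynomial.degree_mul_le _ _).trans ?_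
    calc Polynomial.degree (Polynomial.C ((c lam : ℂ) * pPartitionEval lam z)) +
          Polynomial.degree (Polynomial.X ^ Multiset.card lam.parts)
        ≤ 0 + (Multiset.card lam.parts : WithBot ℕ) := by
          gcongr
          · exact Polynomial.degree_C_le
          · simp [Polynomial.degree_X_pow]
      _ ≤ (m : WithBot ℕ) := by
          simp only [zero_add]
          exact_mod_cast card_le_of_partition lam
  · intro n
    simp only [Polynomial.eval_finset_sum, Polynomial.eval_mul, Polynomial.eval_C,
      Polynomial.eval_pow, Polynomial.eval_X, pPartitionEval_replicate]
    refine Finset.sum_congr rfl fun lam _ => ?_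
    ring
  · intro n
    rw [Finset.mul_sum]
    simp only [Polynomial.eval_finset_sum, Polynomial.eval_mul, Polynomial.eval_C,
      Polynomial.eval_pow, Polynomial.eval_X, pPartitionEval_replicate]
    refine Finset.sum_congr rfl fun lam _ => ?_
    have h := card_le_of_partition lam
    have key : (-1 : ℂ) ^ m * (-1 : ℂ) ^ (m - Multiset.card lam.parts)
        = (-1 : ℂ) ^ (Multiset.card lam.parts) := by
      rw [← pow_add]
      have e : m + (m - Multiset.card lam.parts)
          = 2 * (m - Multiset.card lam.parts) + Multiset.card lam.parts := by omega
      rw [e, pow_add, pow_mul]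
      simp
    rw [neg_pow (n := Multiset.card lam.parts)]
    calc (c lam : ℂ) * pPartitionEval lam z *
          ((-1 : ℂ) ^ Multiset.card lam.parts * (n : ℂ) ^ Multiset.card lam.parts)
        = (c lam : ℂ) * pPartitionEval lam z *
          (((-1 : ℂ) ^ m * (-1 : ℂ) ^ (m - Multiset.card lam.parts)) *
            (n : ℂ) ^ Multiset.card lam.parts) := by rw [key]
      _ = (-1 : ℂ) ^ m * ((c lam : ℂ) * (-1 : ℂ) ^ (m - Multiset.card lam.parts) *
            ((n : ℂ) ^ Multiset.card lam.parts * pPartitionEval lam z)) := by ring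
end

section
/- For all m ≥ 0 and all z = (z₁,...,z_k) ∈ ℂ^k, the evaluations of the elementary and complete homogeneous symmetric polynomials at repeated tuples satisfy the reciprocity: the polynomial (in n) given by n ↦ e_m(z^n) evaluated at -n equals (-1)^m h_m(z^n), where z^n is the tuple z repeated n times. -/
/-!
The generating function of `e_m` at `z^n` is `P(X)^n` with `P(X) = ∏ᵢ (1 + zᵢ X)`, and that of
`h_m` at `z^n` is `P(-X)^(-n)`. Both are instances of `∏ᵢ (1 + zᵢ X)^r`, which by the binomial
series is `∏ᵢ ∑_c (r choose c) zᵢ^c X^c`; its `X^m`-coefficient is therefore a polynomial in `r`,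
and evaluating it at `r = n` and `r = -n` gives the two sides.
-/

/-- The elementary symmetric polynomial `e_m` evaluated at a finite family `z : ι → ℂ`:
`e_m(z) = ∑_{S ⊆ ι, |S| = m} ∏_{i ∈ S} z i`. -/
noncomputable def esymEval {ι : Type*} [Fintype ι] [DecidableEq ι] (m : ℕ) (z : ι → ℂ) : ℂ :=
  ∑ s ∈ Finset.powersetCard m (Finset.univ : Finset ι), ∏ i ∈ s, z i

/-- The complete homogeneous symmetric polynomial `h_m` evaluated at a finite family
`z : ι → ℂ`: the sum over all multisets of indices of size `m` of the corresponding
monomials, i.e. `h_m(z) = ∑_{i₁ ≤ ⋯ ≤ i_m} z_{i₁} ⋯ z_{i_m}`. -/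
noncomputable def hsymEval {ι : Type*} [Fintype ι] [DecidableEq ι] (m : ℕ) (z : ι → ℂ) : ℂ :=
  ∑ s : Sym ι m, ((s : Multiset ι).map z).prod

open Finset PowerSeries

section GeneratingFunctions

variable {ι : Type*} [Fintype ι] [DecidableEq ι]

theorem esymEval_eq_coeff_prod (m : ℕ) (w : ι → ℂ) :
    esymEval m w = coeff m (∏ i, (1 + C (w i) * X)) := by
  simp only [add_comm (1 : ℂ⟦X⟧), prod_add, prod_const_one, mul_one, prod_mul_distrib, prod_const,
    ← map_prod, map_sum, coeff_C_mul_X_pow]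
  rw [esymEval, powersetCard_eq_filter, sum_filter]
  exact sum_congr rfl fun s _ => by simp only [eq_comm]

theorem hsymEval_eq_coeff_prod (m : ℕ) (w : ι → ℂ) :
    hsymEval m w = coeff m (∏ i, mk fun j => w i ^ j) := by
  let e : Sym ι m ≃ univ.finsuppAntidiag m := (Sym.equivNatSum ι m).trans
    (Equiv.subtypeEquivRight fun P => by simp [mem_finsuppAntidiag, Finsupp.sum_fintype])
  rw [coeff_prod, ← sum_coe_sort, hsymEval]
  refine (Fintype.sum_equiv e.symm _ _ fun P => ?_).symm
  simp only [e, Equiv.symm_trans_apply, Equiv.subtypeEquivRight_symm_apply_coe,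
    Sym.coe_equivNatSum_symm_apply, Finsupp.toMultiset_map, Finsupp.prod_toMultiset,
    Finsupp.prod_mapDomain_index (fun _ => pow_zero _) (fun _ _ _ => pow_add _ _ _),
    Finsupp.prod_fintype _ _ (fun _ => pow_zero _), coeff_mk]

end GeneratingFunctions

section BinomialProducts

variable {K : Type*} [Field K] [CharZero K] {ι : Type*} [Fintype ι]

/-- `∏ i, (1 + a i X) ^ r` for an arbitrary exponent `r : K`. -/
noncomputable def binomialProd (a : ι → K) (r : K) : K⟦X⟧ :=
  ∏ i, rescale (a i) (binomialSeries K r)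

noncomputable def binomialProdCoeffPoly [DecidableEq ι] (m : ℕ) (a : ι → K) : Polynomial K :=
  ∑ μ ∈ univ.finsuppAntidiag m, ∏ i, Polynomial.C (a i ^ μ i) * Ring.choose Polynomial.X (μ i)

theorem Polynomial.eval_choose_X (r : K) (c : ℕ) :
    (Ring.choose (Polynomial.X : Polynomial K) c).eval r = Ring.choose r c := by
  simpa using Ring.map_choose (Polynomial.evalRingHom r) Polynomial.X c

theorem eval_binomialProdCoeffPoly [DecidableEq ι] (m : ℕ) (a : ι → K) (r : K) :
    (binomialProdCoeffPoly m a).eval r = coeff m (binomialProd a r) := by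
  simp [binomialProdCoeffPoly, binomialProd, coeff_prod, coeff_rescale, Polynomial.eval_finsetSum,
    Polynomial.eval_prod, Polynomial.eval_choose_X]

theorem prod_one_add_C_mul_X_comp_snd (α : Type*) [Fintype α] (a : ι → K) :
    ∏ p : α × ι, (1 + C (a p.2) * X) = binomialProd a (Fintype.card α) := by
  simp [binomialProd, Fintype.prod_prod_type_right, rescale_X]

theorem geometric_pow_eq_rescale_binomialSeries (a : K) (n : ℕ) :
    (mk fun j => a ^ j) ^ n = rescale (-a) (binomialSeries K (-(n : K))) := by
  have hgeom : (mk fun j => a ^ j) * (1 - C a * X) = 1 := by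
    simpa [rescale_mk, rescale_X] using congrArg (rescale a) (mk_one_mul_one_sub_eq_one (S := K))
  have hbinom : binomialSeries K (-(n : K)) * binomialSeries K (n : K) = 1 := by
    rw [← binomialSeries_add, neg_add_cancel, binomialSeries_zero]
  have hpow : (mk fun j => a ^ j) ^ n * (1 - C a * X) ^ n = 1 := by rw [← mul_pow, hgeom, one_pow]
  refine left_inv_eq_right_inv hpow ?_
  have hrescale : rescale (-a) (binomialSeries K (n : K)) = (1 - C a * X) ^ n := by
    simp [rescale_X, sub_eq_add_neg]
  rw [← hrescale, ← map_mul, mul_comm, hbinom, map_one]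

theorem prod_geometric_comp_snd (α : Type*) [Fintype α] (a : ι → K) :
    ∏ p : α × ι, (mk fun j => a p.2 ^ j) = rescale (-1) (binomialProd a (-(Fintype.card α))) := by
  simp [binomialProd, Fintype.prod_prod_type_right, geometric_pow_eq_rescale_binomialSeries,
    rescale_rescale]

end BinomialProducts

/-- For `m ≥ 0` and `z ∈ ℂ^k`, the function `n ↦ e_m(z^n)` (with `z^n` the
tuple `z` repeated `n` times, here indexed by `Fin n × Fin k`) is a polynomial in `n`,
and this polynomial evaluated at `-n` equals `(-1)^m h_m(z^n)`. -/
theorem esym_hsym_reciprocity (m k : ℕ) (z : Fin k → ℂ) :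
    ∃ E : Polynomial ℂ,
      (∀ n : ℕ, E.eval (n : ℂ) = esymEval m (fun p : Fin n × Fin k => z p.2)) ∧
      (∀ n : ℕ, E.eval (-(n : ℂ)) = (-1 : ℂ) ^ m * hsymEval m (fun p : Fin n × Fin k => z p.2)) := by
  refine ⟨binomialProdCoeffPoly m z, fun n => ?_, fun n => ?_⟩
  · rw [esymEval_eq_coeff_prod, prod_one_add_C_mul_X_comp_snd, Fintype.card_fin,
      eval_binomialProdCoeffPoly]
  · rw [hsymEval_eq_coeff_prod, prod_geometric_comp_snd, Fintype.card_fin, coeff_rescale,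
      eval_binomialProdCoeffPoly, ← mul_assoc, ← mul_pow, neg_one_mul, neg_neg, one_pow, one_mul]
end

section
/- Suppose f : ℕ → ℂ satisfies a homogeneous linear recurrence f(n+d) + α₁ f(n+d-1) + ... + α_d f(n) = 0 for all n ≥ 0 with α_d ≠ 0, and also satisfies another such recurrence f(n+e) + β₁ f(n+e-1) + ... + β_e f(n) = 0 with β_e ≠ 0. Then the extensions of f to negative integers obtained by running each recurrence backwards agree: both define the same function f : ℤ → ℂ. -/
/-!
The residual operators `g ↦ g (· + d) + ∑ αᵢ g (· + d - i)` are polynomials in the shift, so they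
commute. Hence the `α`-residual of `g₂` satisfies the `β`-recurrence; it vanishes on `ℕ`, where
`g₂ = g₁`, and a solution of a recurrence with nonzero last coefficient that vanishes on `ℕ`
vanishes everywhere, since running the recurrence backwards determines each value from later
ones. So `g₂` satisfies the `α`-recurrence as well, and `g₁ - g₂` is an `α`-solution vanishing
on `ℕ`.
-/

open Finset

section Semiring

variable {R : Type*} [Semiring R] (d : ℕ) (α : ℕ → R)

def recurrenceResidual (g : ℤ → R) (n : ℤ) : R :=
  g (n + d) + ∑ i ∈ Icc 1 d, α i * g (n + (d : ℤ) - (i : ℤ))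

variable {d α}

@[simp]
theorem recurrenceResidual_zero_order (g : ℤ → R) : recurrenceResidual 0 α g = g := by
  funext n
  simp [recurrenceResidual]

@[simp]
theorem recurrenceResidual_zero : recurrenceResidual d α (0 : ℤ → R) = 0 := by
  funext n
  simp [recurrenceResidual]

theorem recurrenceResidual_congr {g₁ g₂ : ℤ → R} {n : ℤ} (h : ∀ m ≥ n, g₁ m = g₂ m) :
    recurrenceResidual d α g₁ n = recurrenceResidual d α g₂ n := by
  unfold recurrenceResidual
  rw [h _ (by omega)]
  congr 1
  refine sum_congr rfl fun i hi => ?_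
  rw [h _ (by simp only [mem_Icc] at hi; omega)]

theorem recurrenceResidual_eq_mul_of_forall_gt {g : ℤ → R} {n : ℤ} (hd : 0 < d)
    (h : ∀ m > n, g m = 0) : recurrenceResidual d α g n = α d * g n := by
  unfold recurrenceResidual
  rw [h _ (by omega), zero_add, sum_eq_single_of_mem d (mem_Icc.mpr ⟨hd, le_rfl⟩),
    add_sub_cancel_right]
  intro i hi hid
  rw [h _ (by simp only [mem_Icc] at hi; omega), mul_zero]

theorem eq_zero_of_recurrenceResidual_eq_zero [NoZeroDivisors R] {g : ℤ → R} (hα : α d ≠ 0)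
    (hg : recurrenceResidual d α g = 0) (hnat : ∀ n : ℕ, g n = 0) : g = 0 := by
  rcases Nat.eq_zero_or_pos d with rfl | hd
  · simpa using hg
  have hIci : ∀ n ≤ 0, ∀ m ≥ n, g m = 0 := by
    intro n hn
    induction n, hn using Int.leInductionDown with
    | base => intro m hm; lift m to ℕ using hm; exact hnat m
    | pred n _ ih =>
      intro m hm
      rcases hm.eq_or_lt with rfl | hlt
      · have hres := congr_fun hg (n - 1)
        rw [recurrenceResidual_eq_mul_of_forall_gt hd fun k hk => ih k (by omega)] at hres
        exact (mul_eq_zero.mp hres).resolve_left hα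
      · exact ih m (by omega)
  funext n
  exact hIci (min n 0) (min_le_right _ _) n (min_le_left _ _)

end Semiring

section CommSemiring

variable {R : Type*} [CommSemiring R] {d e : ℕ} {α β : ℕ → R}

theorem recurrenceResidual_comm (g : ℤ → R) :
    recurrenceResidual d α (recurrenceResidual e β g) =
      recurrenceResidual e β (recurrenceResidual d α g) := by
  funext n
  simp only [recurrenceResidual, mul_add, mul_sum, sum_add_distrib]
  rw [sum_comm (s := Icc 1 e)]
  ring_nf
  congr 1
  refine sum_congr rfl fun i _ => sum_congr rfl fun j _ => ?_
  rw [sub_right_comm, mul_comm (α i)]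

theorem recurrenceResidual_eq_zero_of_forall_nat [NoZeroDivisors R] {g : ℤ → R} (hβ : β e ≠ 0)
    (hg : recurrenceResidual e β g = 0) (hnat : ∀ n : ℕ, recurrenceResidual d α g n = 0) :
    recurrenceResidual d α g = 0 :=
  eq_zero_of_recurrenceResidual_eq_zero hβ
    (by rw [← recurrenceResidual_comm, hg, recurrenceResidual_zero]) hnat

end CommSemiring

section Ring

variable {R : Type*} [Ring R] {d : ℕ} {α : ℕ → R}

theorem recurrenceResidual_sub (g₁ g₂ : ℤ → R) :
    recurrenceResidual d α (g₁ - g₂) = recurrenceResidual d α g₁ - recurrenceResidual d α g₂ := by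
  funext n
  simp only [recurrenceResidual, Pi.sub_apply, mul_sub, sum_sub_distrib]
  abel

theorem eq_of_recurrenceResidual_eq_zero [NoZeroDivisors R] {g₁ g₂ : ℤ → R} (hα : α d ≠ 0)
    (hg₁ : recurrenceResidual d α g₁ = 0) (hg₂ : recurrenceResidual d α g₂ = 0)
    (hnat : ∀ n : ℕ, g₁ n = g₂ n) : g₁ = g₂ :=
  sub_eq_zero.mp <| eq_zero_of_recurrenceResidual_eq_zero hα
    (by rw [recurrenceResidual_sub, hg₁, hg₂, sub_zero]) fun n => sub_eq_zero.mpr (hnat n)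

end Ring

theorem backward_extensions_agree_general (f : ℕ → ℂ) (d e : ℕ)
    (α β : ℕ → ℂ) (hα : α d ≠ 0) (hβ : β e ≠ 0)
    (g₁ g₂ : ℤ → ℂ)
    (hg₁f : ∀ n : ℕ, g₁ n = f n) (hg₂f : ∀ n : ℕ, g₂ n = f n)
    (hg₁ : ∀ n : ℤ, g₁ (n + d) + ∑ i ∈ Finset.Icc 1 d, α i * g₁ (n + (d : ℤ) - (i : ℤ)) = 0)
    (hg₂ : ∀ n : ℤ, g₂ (n + e) + ∑ i ∈ Finset.Icc 1 e, β i * g₂ (n + (e : ℤ) - (i : ℤ)) = 0) :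
    g₁ = g₂ := by
  have hres₁ : recurrenceResidual d α g₁ = 0 := funext hg₁
  have hres₂ : recurrenceResidual e β g₂ = 0 := funext hg₂
  have hnat : ∀ n : ℕ, g₁ n = g₂ n := fun n => (hg₁f n).trans (hg₂f n).symm
  have hres₂α : recurrenceResidual d α g₂ = 0 := by
    refine recurrenceResidual_eq_zero_of_forall_nat hβ hres₂ fun n => ?_
    rw [← recurrenceResidual_congr fun m hm => ?_, hres₁, Pi.zero_apply]
    lift m to ℕ using (Int.natCast_nonneg n).trans hm
    exact hnat m
  exact eq_of_recurrenceResidual_eq_zero hα hres₁ hres₂α hnat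

/-- Suppose `f : ℕ → ℂ` satisfies two homogeneous linear recurrences with
constant coefficients, `f(n+d) + α₁ f(n+d-1) + ⋯ + α_d f(n) = 0` with `α_d ≠ 0` and
`f(n+e) + β₁ f(n+e-1) + ⋯ + β_e f(n) = 0` with `β_e ≠ 0`. Then the extensions of `f` to
all integers obtained by running each recurrence backwards (i.e. the unique functions
`g : ℤ → ℂ` extending `f` and satisfying the respective recurrence for all `n ∈ ℤ`)
coincide. -/
theorem backward_extensions_agree (f : ℕ → ℂ) (d e : ℕ) (hd : 1 ≤ d) (he : 1 ≤ e)
    (α β : ℕ → ℂ) (hα : α d ≠ 0) (hβ : β e ≠ 0)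
    (hf1 : ∀ n : ℕ, f (n + d) + ∑ i ∈ Finset.Icc 1 d, α i * f (n + d - i) = 0)
    (hf2 : ∀ n : ℕ, f (n + e) + ∑ i ∈ Finset.Icc 1 e, β i * f (n + e - i) = 0)
    (g₁ g₂ : ℤ → ℂ)
    (hg₁f : ∀ n : ℕ, g₁ n = f n) (hg₂f : ∀ n : ℕ, g₂ n = f n)
    (hg₁ : ∀ n : ℤ, g₁ (n + d) + ∑ i ∈ Finset.Icc 1 d, α i * g₁ (n + (d : ℤ) - (i : ℤ)) = 0)
    (hg₂ : ∀ n : ℤ, g₂ (n + e) + ∑ i ∈ Finset.Icc 1 e, β i * g₂ (n + (e : ℤ) - (i : ℤ)) = 0) :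
    g₁ = g₂ :=
  backward_extensions_agree_general f d e α β hα hβ g₁ g₂ hg₁f hg₂f hg₁ hg₂
end

section
/- Let M be an invertible m×m matrix over a field. Then for every k-element subset I, J of {1,...,m}, det(M^{-1}[I,J]) = (-1)^{σ(I)+σ(J)} det(M[Jᶜ,Iᶜ]) / det(M). -/
/-- The minor `det M[I,J]` of a square matrix `M`, with rows the subset `I` and columns
the subset `J` (both taken in increasing order). -/
noncomputable def minorDet {F : Type*} [Field F] {m : ℕ} (M : Matrix (Fin m) (Fin m) F)
    (I J : Finset (Fin m)) (h : J.card = I.card) : F :=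
  Matrix.det (Matrix.of fun a b : Fin I.card =>
    M ((I.orderIsoOfFin rfl a : Fin m)) ((J.orderIsoOfFin h b : Fin m)))

/-- `σ(I)`: the sum of the elements of `I ⊆ {1,…,m}` (elements of `Fin m` counted as
`1,…,m`). -/
def sigmaSum {m : ℕ} (I : Finset (Fin m)) : ℕ := ∑ i ∈ I, ((i : ℕ) + 1)

/-!
Put `J` and `I` first: with `eI : Fin k ⊕ Fin (m - k) ≃ Fin m` listing `I` and then `Iᶜ` in
increasing order, the matrix `Q = M.submatrix eJ eI` has `Q⁻¹ = M⁻¹.submatrix eI eJ`, so the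
top-left block of `Q⁻¹` is `M⁻¹[I,J]` and the bottom-right block of `Q` is `M[Jᶜ,Iᶜ]`. For any
invertible block matrix `det (Q⁻¹)₁₁ * det Q = det Q₂₂`, because
`Q * [(Q⁻¹)₁₁, 0; (Q⁻¹)₂₁, 1] = [1, Q₁₂; 0, Q₂₂]`. Finally `det Q = sign (eI ∘ eJ⁻¹) * det M`
and this sign is `(-1) ^ (σ(I) + σ(J))`: moving an element of `I` one step down to a free place
lowers `σ(I)` by one and composes the permutation with a transposition, and once neither set
can be moved, both are initial segments of the same size, hence equal.
-/

open Matrix Finset Equiv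

namespace Matrix

variable {R n o : Type*} [CommRing R] [Fintype n] [DecidableEq n] [Fintype o] [DecidableEq o]

theorem det_submatrix_equiv (M : Matrix o o R) (e f : n ≃ o) :
    (M.submatrix e f).det = Perm.sign (e.symm.trans f) * M.det := by
  have : M.submatrix e f = (M.submatrix id (e.symm.trans f)).submatrix e e := by
    ext; simp
  rw [this, det_submatrix_equiv_self, det_permute']

theorem det_inv_toBlocks₁₁_mul_det (M : Matrix (n ⊕ o) (n ⊕ o) R) (hM : IsUnit M.det) :
    M⁻¹.toBlocks₁₁.det * M.det = M.toBlocks₂₂.det := by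
  have hMN : ∀ i j, ∑ a, M i (.inl a) * M⁻¹ (.inl a) j + ∑ b, M i (.inr b) * M⁻¹ (.inr b) j
      = (1 : Matrix (n ⊕ o) (n ⊕ o) R) i j := fun i j => by
    rw [← M.mul_nonsing_inv hM, mul_apply, Fintype.sum_sum_type]
  have key : M * fromBlocks M⁻¹.toBlocks₁₁ 0 M⁻¹.toBlocks₂₁ 1 =
      fromBlocks 1 M.toBlocks₁₂ 0 M.toBlocks₂₂ := by
    ext (i | i) (j | j) <;>
      simp [mul_apply, Fintype.sum_sum_type, hMN, toBlocks₁₁, toBlocks₂₁, toBlocks₁₂, toBlocks₂₂,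
        one_apply]
  simpa [det_fromBlocks_zero₁₂, det_fromBlocks_zero₂₁, mul_comm] using congrArg det key

end Matrix

theorem strictMonoOn_swap_of_covBy {α : Type*} [LinearOrder α] {x y : α} (hxy : x ⋖ y)
    {s : Set α} (hs : x ∉ s ∨ y ∉ s) : StrictMonoOn (swap x y) s := by
  intro a ha b hb hab
  have hle : ∀ c, c < y → c ≤ x := fun c => hxy.le_of_lt
  have hge : ∀ c, x < c → y ≤ c := fun c => hxy.ge_of_gt
  have := hxy.lt
  simp only [swap_apply_def]
  split_ifs <;> subst_vars <;>
    first | order | tauto | (have := hge b (by order); order) | (have := hle a (by order); order)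

theorem isLowerSet_of_forall_covBy {α : Type*} [PartialOrder α] [SuccOrder α]
    [IsSuccArchimedean α] {s : Set α} (hs : ∀ ⦃a b⦄, a ⋖ b → b ∈ s → a ∈ s) : IsLowerSet s := by
  intro b a hab
  induction hab using Succ.rec with
  | rfl => exact id
  | succ c _ ih =>
    intro hc
    by_cases hmax : IsMax c
    · exact ih (by rwa [Order.succ_eq_iff_isMax.mpr hmax] at hc)
    · exact ih (hs (Order.covBy_succ_of_not_isMax hmax) hc)

namespace Finset

theorem eq_of_card_eq_of_forall_covBy {α : Type*} [LinearOrder α] [SuccOrder α]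
    [IsSuccArchimedean α] {s t : Finset α} (hst : s.card = t.card)
    (hs : ∀ ⦃a b⦄, a ⋖ b → b ∈ s → a ∈ s) (ht : ∀ ⦃a b⦄, a ⋖ b → b ∈ t → a ∈ t) : s = t := by
  rcases (isLowerSet_of_forall_covBy (s := (s : Set α)) hs).total
    (isLowerSet_of_forall_covBy (s := (t : Set α)) ht) with h | h
  · exact eq_of_subset_of_card_le (coe_subset.mp h) hst.ge
  · exact (eq_of_subset_of_card_le (coe_subset.mp h) hst.le).symm

variable {α β : Type*} [LinearOrder α] [LinearOrder β] {k l : ℕ}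

theorem coe_orderIsoOfFin_map {f : α ↪ β} {s : Finset α} {t : Finset β}
    (hf : StrictMonoOn f s) (hst : s.map f = t) (hs : s.card = k) (ht : t.card = k) (a : Fin k) :
    (t.orderIsoOfFin ht a : β) = f (s.orderIsoOfFin hs a) := by
  subst hst
  simp only [coe_orderIsoOfFin_apply]
  refine (congrFun (orderEmbOfFin_unique ht (fun b => mem_map_of_mem f (orderEmbOfFin_mem s hs b))
    fun b c hbc => hf (orderEmbOfFin_mem s hs b) (orderEmbOfFin_mem s hs c)
      ((orderEmbOfFin s hs).strictMono hbc)) a).symm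

variable [Fintype α]

def finSumComplEquiv (s : Finset α) (hs : s.card = k) (hc : sᶜ.card = l) : Fin k ⊕ Fin l ≃ α :=
  (sumCongr (s.orderIsoOfFin hs).toEquiv
    ((sᶜ.orderIsoOfFin hc).toEquiv.trans (subtypeEquivRight fun _ => mem_compl))).trans
    (sumCompl (· ∈ s))

theorem finSumComplEquiv_map {s t : Finset α} {σ : Perm α} (hσ : StrictMonoOn σ s)
    (hσc : StrictMonoOn σ ↑sᶜ) (hst : s.map σ.toEmbedding = t) (hs : s.card = k)
    (hc : sᶜ.card = l) (ht : t.card = k) (htc : tᶜ.card = l) (x : Fin k ⊕ Fin l) :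
    t.finSumComplEquiv ht htc x = σ (s.finSumComplEquiv hs hc x) := by
  have hstc : sᶜ.map σ.toEmbedding = tᶜ := by
    ext; simp [← hst, mem_map_equiv]
  rcases x with a | a
  · exact coe_orderIsoOfFin_map hσ hst hs ht a
  · exact coe_orderIsoOfFin_map hσc hstc hc htc a

theorem finSumComplEquiv_eq_map_swap_trans_swap {x y : α} (hxy : x ⋖ y) {s : Finset α}
    (hx : x ∉ s) (hy : y ∈ s) (hs : s.card = k) (hc : sᶜ.card = l)
    (hs' : (s.map (swap x y).toEmbedding).card = k)
    (hc' : (s.map (swap x y).toEmbedding)ᶜ.card = l) :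
    s.finSumComplEquiv hs hc =
      ((s.map (swap x y).toEmbedding).finSumComplEquiv hs' hc').trans (swap x y) := by
  have hy' : y ∉ s.map (swap x y).toEmbedding := by simp [mem_map_equiv, hx]
  have hx' : x ∉ (((s.map (swap x y).toEmbedding)ᶜ : Finset α) : Set α) := by simp [hy]
  have hmap : (s.map (swap x y).toEmbedding).map (swap x y).toEmbedding = s := by
    ext; simp [mem_map_equiv]
  exact Equiv.ext fun _ => finSumComplEquiv_map (strictMonoOn_swap_of_covBy hxy (.inr hy'))
    (strictMonoOn_swap_of_covBy hxy (.inl hx')) hmap hs' hc' hs hc _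

end Finset

theorem sigmaSum_map_swap_add_one {m : ℕ} {s : Finset (Fin m)} {x y : Fin m} (hxy : x ⋖ y)
    (hx : x ∉ s) (hy : y ∈ s) : sigmaSum (s.map (swap x y).toEmbedding) + 1 = sigmaSum s := by
  have hval : (x : ℕ) + 1 = y := Nat.covBy_iff_add_one_eq.mp (Fin.covBy_iff.mp hxy)
  have hfix : ∑ i ∈ s.erase y, ((swap x y i : ℕ) + 1) = ∑ i ∈ s.erase y, ((i : ℕ) + 1) :=
    sum_congr rfl fun i hi => by
      rw [swap_apply_of_ne_of_ne (ne_of_mem_of_not_mem (mem_of_mem_erase hi) hx)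
        (ne_of_mem_erase hi)]
  rw [sigmaSum, sigmaSum, sum_map, ← add_sum_erase s _ hy, ← add_sum_erase s _ hy]
  simp only [toEmbedding_apply, swap_apply_right, hfix]
  omega

theorem sign_finSumComplEquiv_symm_trans {m k l : ℕ} (s t : Finset (Fin m)) (hs : s.card = k)
    (hsc : sᶜ.card = l) (ht : t.card = k) (htc : tᶜ.card = l) :
    Perm.sign ((t.finSumComplEquiv ht htc).symm.trans (s.finSumComplEquiv hs hsc)) =
      (-1) ^ (sigmaSum s + sigmaSum t) := by
  induction hn : sigmaSum s + sigmaSum t using Nat.strong_induction_on generalizing s t with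
  | _ n ih =>
  have step : ∀ (s t : Finset (Fin m)) (hs : s.card = k) (hsc : sᶜ.card = l) (ht : t.card = k)
      (htc : tᶜ.card = l), sigmaSum s + sigmaSum t = n → ∀ x y, x ⋖ y → x ∉ s → y ∈ s →
      Perm.sign ((t.finSumComplEquiv ht htc).symm.trans (s.finSumComplEquiv hs hsc)) =
        (-1) ^ n := by
    intro s t hs hsc ht htc hn x y hxy hx hy
    set s' := s.map (swap x y).toEmbedding
    have hs'card : s'.card = k := by rw [card_map, hs]
    have hs'ccard : s'ᶜ.card = l := by rw [card_compl, hs'card, ← hs, ← card_compl, hsc]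
    have hsum : sigmaSum s' + 1 = sigmaSum s := sigmaSum_map_swap_add_one hxy hx hy
    have hglue : (t.finSumComplEquiv ht htc).symm.trans (s.finSumComplEquiv hs hsc) = swap x y *
        (t.finSumComplEquiv ht htc).symm.trans (s'.finSumComplEquiv hs'card hs'ccard) := by
      rw [finSumComplEquiv_eq_map_swap_trans_swap hxy hx hy hs hsc hs'card hs'ccard]
      rfl
    rw [hglue, Perm.sign_mul, Perm.sign_swap hxy.ne, ih (n - 1) (by omega) s' t _ _ _ _ (by omega),
      ← pow_succ', Nat.sub_add_cancel (by omega)]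
  by_cases hs_closed : ∀ ⦃a b⦄, a ⋖ b → b ∈ s → a ∈ s
  · by_cases ht_closed : ∀ ⦃a b⦄, a ⋖ b → b ∈ t → a ∈ t
    · obtain rfl := eq_of_card_eq_of_forall_covBy (hs.trans ht.symm) hs_closed ht_closed
      rw [← hn, symm_trans_self, Perm.sign_refl, Even.neg_one_pow ⟨_, rfl⟩]
    · push Not at ht_closed
      obtain ⟨x, y, hxy, hy, hx⟩ := ht_closed
      rw [← Perm.sign_symm, symm_trans, symm_symm]
      exact step t s ht htc hs hsc (by omega) x y hxy hx hy
  · push Not at hs_closed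
    obtain ⟨x, y, hxy, hy, hx⟩ := hs_closed
    exact step s t hs hsc ht htc hn x y hxy hx hy

/-- Jacobi's theorem on minors of the inverse: for an invertible `m × m`
matrix `M` over a field and `k`-element subsets `I, J` of `{1,…,m}`,
`det(M⁻¹[I,J]) = (-1)^{σ(I)+σ(J)} det(M[Jᶜ,Iᶜ]) / det M`. -/
theorem jacobi_minors_of_inverse {F : Type*} [Field F] (m k : ℕ)
    (M : Matrix (Fin m) (Fin m) F) (hM : IsUnit M.det)
    (I J : Finset (Fin m)) (hI : I.card = k) (hJ : J.card = k) :
    minorDet M⁻¹ I J (hJ.trans hI.symm)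
      = (-1 : F) ^ (sigmaSum I + sigmaSum J) *
          minorDet M Jᶜ Iᶜ (by simp [Finset.card_compl, hI, hJ]) / M.det := by
  subst hI
  have hc : Iᶜ.card = Jᶜ.card := by simp [card_compl, hJ]
  set Q := M.submatrix (J.finSumComplEquiv hJ rfl) (I.finSumComplEquiv rfl hc)
  have hQ : Q.det = (-1) ^ (sigmaSum I + sigmaSum J) * M.det := by
    simp [Q, det_submatrix_equiv, sign_finSumComplEquiv_symm_trans]
  have h11 : minorDet M⁻¹ I J hJ = Q⁻¹.toBlocks₁₁.det := by
    rw [inv_submatrix_equiv]; rfl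
  have h22 : minorDet M Jᶜ Iᶜ hc = Q.toBlocks₂₂.det := rfl
  have hsq : (-1 : F) ^ (sigmaSum I + sigmaSum J) * (-1) ^ (sigmaSum I + sigmaSum J) = 1 := by
    rw [← mul_pow, neg_one_mul, neg_neg, one_pow]
  have key := det_inv_toBlocks₁₁_mul_det Q (by rw [hQ]; exact ((isUnit_one.neg).pow _).mul hM)
  rw [h11, h22, ← key, hQ, eq_div_iff hM.ne_zero]
  linear_combination (-(Q⁻¹.toBlocks₁₁.det * M.det)) * hsq
end

section
/- Let G be a finite acyclic directed graph with complex edge weights, with distinguished sources s₁,...,s_m and sinks t₁,...,t_m. Assume the graph is planar with sources and sinks on the boundary in the order s₁,...,s_m,t_m,...,t₁ (so that any tuple of vertex-disjoint paths from sources indexed by I = {i₁<...<i_k} to sinks indexed by J = {j₁<...<j_k} must connect s_{i_ℓ} to t_{j_ℓ}). Then det(P[I,J]) = ∑_Π w(Π), where P is the m×m path matrix with P_{i,j} = ∑_{π: s_i → t_j} w(π), and the sum on the right is over all tuples Π of pairwise vertex-disjoint paths from (s_{i₁},...,s_{i_k}) to (t_{j₁},...,t_{j_k}), with w(Π) the product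 of the weights of all edges used. -/
/-!
Expanding the determinant of the path matrix gives a signed sum over pairs `(σ, P)` of a
permutation `σ` and a family of paths `P a` from `s a` to `t (σ a)`. On the pairs whose family is
not vertex-disjoint, exchange the tails of two paths at their first crossing: the least path index
meeting another path, the first vertex on it that lies on another path, and the least other path
through that vertex. This keeps the total weight and composes `σ` with a transposition. Because
the graph is acyclic, the spliced walks are again paths, and the first crossing of the new family
is the same one, so the exchange is an involution and these terms cancel. By the planarity
hypothesis, the remaining vertex-disjoint families occur only for `σ = 1`.
-/

attribute [local instance] Classical.propDecidable

/-- The data of a candidate path in a finite graph on vertex set `V`: a number of edges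
`ℓ ≤ card V` together with a sequence of `ℓ + 1` vertices. (In an acyclic graph every
path is vertex-disjoint, hence has at most `card V` vertices, so this bound loses no
paths.) -/
abbrev PathData (V : Type*) [Fintype V] : Type _ :=
  Σ ℓ : Fin (Fintype.card V + 1), (Fin ((ℓ : ℕ) + 1) → V)

/-- `p` is a directed path from `u` to `v` for the adjacency relation `Adj`. -/
def IsPath {V : Type*} [Fintype V] (Adj : V → V → Prop) (p : PathData V) (u v : V) : Prop :=
  p.2 0 = u ∧ p.2 (Fin.last (p.1 : ℕ)) = v ∧
    ∀ i : Fin (p.1 : ℕ), Adj (p.2 i.castSucc) (p.2 i.succ)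

/-- The weight of a path: the product of its edge weights. -/
noncomputable def pathWeight {V : Type*} [Fintype V] (w : V → V → ℂ) (p : PathData V) : ℂ :=
  ∏ i : Fin (p.1 : ℕ), w (p.2 i.castSucc) (p.2 i.succ)

/-- The path matrix of a weighted graph with sources `s 1, …, s m` and sinks
`t 1, …, t m`: its `(i,j)` entry is the sum of the weights of all paths from `s i`
to `t j`. -/
noncomputable def pathMatrix {V : Type*} [Fintype V] (Adj : V → V → Prop) (w : V → V → ℂ)
    {m : ℕ} (s t : Fin m → V) : Matrix (Fin m) (Fin m) ℂ :=
  fun i j => ∑ p : PathData V, if IsPath Adj p (s i) (t j) then pathWeight w p else 0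

/-- A tuple of paths is non-intersecting (pairwise vertex-disjoint). -/
def DisjointPaths {V : Type*} [Fintype V] {kk : ℕ} (P : Fin kk → PathData V) : Prop :=
  ∀ a b : Fin kk, a ≠ b →
    ∀ (x : Fin (((P a).1 : ℕ) + 1)) (y : Fin (((P b).1 : ℕ) + 1)), (P a).2 x ≠ (P b).2 y

open Finset Equiv

section

variable {V : Type*}

def IsAdjChain (Adj : V → V → Prop) (L : ℕ) (f : ℕ → V) : Prop :=
  ∀ i < L, Adj (f i) (f (i + 1))

namespace IsAdjChain

variable {Adj : V → V → Prop} {L : ℕ} {f : ℕ → V}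

theorem transGen (h : IsAdjChain Adj L f) {i j : ℕ} (hij : i < j) (hj : j ≤ L) :
    Relation.TransGen Adj (f i) (f j) := by
  induction j, hij using Nat.le_induction with
  | base => exact .single (h i hj)
  | succ n _ ih => exact (ih (by omega)).tail (h n hj)

theorem injOn (hacyc : ∀ v, ¬ Relation.TransGen Adj v v) (h : IsAdjChain Adj L f) :
    Set.InjOn f (Set.Iic L) := by
  intro i hi j hj hij
  by_contra hne
  rcases Nat.lt_or_gt_of_ne hne with hlt | hlt
  · exact hacyc (f j) (by simpa only [hij] using h.transGen hlt hj)
  · exact hacyc (f i) (by simpa only [hij] using h.transGen hlt hi)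

theorem lt_card [Fintype V] (hacyc : ∀ v, ¬ Relation.TransGen Adj v v)
    (h : IsAdjChain Adj L f) : L < Fintype.card V := by
  simpa using Fintype.card_le_of_injective (fun i : Fin (L + 1) => f i)
    fun i j hij => Fin.ext (h.injOn hacyc (Nat.lt_succ_iff.mp i.2) (Nat.lt_succ_iff.mp j.2) hij)

end IsAdjChain

def spliceSeq (f g : ℕ → V) (x y i : ℕ) : V :=
  if i ≤ x then f i else g (y + i - x)

section spliceSeq

variable {f g : ℕ → V} {x y : ℕ}

theorem spliceSeq_of_le {i : ℕ} (h : i ≤ x) : spliceSeq f g x y i = f i := if_pos h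

theorem spliceSeq_of_lt {i : ℕ} (h : x < i) : spliceSeq f g x y i = g (y + i - x) :=
  if_neg h.not_ge

theorem spliceSeq_add_sub {M : ℕ} (hy : y ≤ M) (hv : f x = g y) :
    spliceSeq f g x y (x + (M - y)) = g M := by
  rcases hy.eq_or_lt with rfl | hlt
  · rw [Nat.sub_self, Nat.add_zero, spliceSeq_of_le le_rfl, hv]
  · rw [spliceSeq_of_lt (by omega)]
    congr 1
    omega

theorem IsAdjChain.spliceSeq {Adj : V → V → Prop} {L M : ℕ} (hf : IsAdjChain Adj L f)
    (hg : IsAdjChain Adj M g) (hx : x ≤ L) (hv : f x = g y) :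
    IsAdjChain Adj (x + (M - y)) (spliceSeq f g x y) := by
  intro i hi
  rcases lt_trichotomy i x with h | rfl | h
  · rw [spliceSeq_of_le h.le, spliceSeq_of_le h]
    exact hf i (by omega)
  · rw [spliceSeq_of_le le_rfl, spliceSeq_of_lt (by omega), hv,
      show y + (i + 1) - i = y + 1 by omega]
    exact hg y (by omega)
  · rw [spliceSeq_of_lt h, spliceSeq_of_lt (by omega),
      show y + (i + 1) - x = y + i - x + 1 by omega]
    exact hg _ (by omega)

end spliceSeq

def chainWeight {M : Type*} [CommMonoid M] (w : V → V → M) (L : ℕ) (f : ℕ → V) : M :=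
  ∏ i ∈ range L, w (f i) (f (i + 1))

section chainWeight

variable {M : Type*} [CommMonoid M] (w : V → V → M)

theorem chainWeight_eq_mul (f : ℕ → V) {y L : ℕ} (hy : y ≤ L) :
    chainWeight w L f =
      chainWeight w y f * ∏ i ∈ range (L - y), w (f (y + i)) (f (y + i + 1)) := by
  rw [chainWeight, ← Nat.add_sub_cancel' hy, prod_range_add, Nat.add_sub_cancel_left]
  rfl

theorem chainWeight_spliceSeq {f g : ℕ → V} {x y L : ℕ} (hv : f x = g y) :
    chainWeight w (x + (L - y)) (spliceSeq f g x y) =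
      chainWeight w x f * ∏ i ∈ range (L - y), w (g (y + i)) (g (y + i + 1)) := by
  rw [chainWeight, prod_range_add]
  congr 1
  · refine prod_congr rfl fun i hi => ?_
    rw [mem_range] at hi
    rw [spliceSeq_of_le hi.le, spliceSeq_of_le hi]
  · refine prod_congr rfl fun i _ => ?_
    have hstart : spliceSeq f g x y (x + i) = g (y + i) := by
      rcases i.eq_zero_or_pos with rfl | hi
      · rw [Nat.add_zero, Nat.add_zero, spliceSeq_of_le le_rfl, hv]
      · rw [spliceSeq_of_lt (by omega)]
        congr 1
        omega
    rw [hstart, spliceSeq_of_lt (by omega), show y + (x + i + 1) - x = y + i + 1 by omega]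

end chainWeight

namespace PathData

variable [Fintype V]

def len (p : PathData V) : ℕ := p.1

theorem len_le_card (p : PathData V) : p.len ≤ Fintype.card V := Nat.lt_succ_iff.mp p.1.2

/-- The vertex sequence of `p`, extended constantly beyond its endpoint. -/
def vertex (p : PathData V) (n : ℕ) : V :=
  p.2 ⟨min n p.len, Nat.lt_succ_of_le (min_le_right _ _)⟩

theorem vertex_coe (p : PathData V) (i : Fin (p.1 + 1)) : p.vertex i = p.2 i := by
  simp only [vertex, len, Nat.min_eq_left (Nat.lt_succ_iff.mp i.2)]

theorem ext_vertex {p q : PathData V} (hlen : p.len = q.len)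
    (h : ∀ n ≤ p.len, p.vertex n = q.vertex n) : p = q := by
  obtain ⟨⟨L, hL⟩, f⟩ := p
  obtain ⟨⟨L', hL'⟩, g⟩ := q
  obtain rfl : L = L' := hlen
  congr 1
  funext i
  simpa only [vertex_coe] using h i (Nat.lt_succ_iff.mp i.2)

/-- Truncated to the length bound of `PathData`; for a chain in an acyclic graph the truncation
never takes effect (`IsAdjChain.lt_card`, `len_ofSeq`). -/
def ofSeq (L : ℕ) (f : ℕ → V) : PathData V :=
  ⟨⟨min L (Fintype.card V), Nat.lt_succ_of_le (min_le_right _ _)⟩, fun i => f i⟩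

theorem len_ofSeq {L : ℕ} (f : ℕ → V) (hL : L ≤ Fintype.card V) : (ofSeq L f).len = L :=
  min_eq_left hL

theorem len_ofSeq_le (L : ℕ) (f : ℕ → V) : (ofSeq L f).len ≤ L := min_le_left _ _

theorem vertex_ofSeq {L n : ℕ} (f : ℕ → V) (hn : n ≤ (ofSeq L f).len) :
    (ofSeq L f).vertex n = f n := by
  change f (min n (ofSeq L f).len) = f n
  rw [Nat.min_eq_left hn]

def IsWalk (Adj : V → V → Prop) (p : PathData V) : Prop :=
  IsAdjChain Adj p.len p.vertex

theorem isWalk_ofSeq {Adj : V → V → Prop} {L : ℕ} {f : ℕ → V} (hL : L ≤ Fintype.card V)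
    (h : IsAdjChain Adj L f) : (ofSeq L f).IsWalk Adj := by
  intro i hi
  have hlen := len_ofSeq f hL
  rw [vertex_ofSeq f (by omega), vertex_ofSeq f (by omega)]
  exact h i (by omega)

theorem isPath_iff {Adj : V → V → Prop} {p : PathData V} {u v : V} :
    IsPath Adj p u v ↔ p.vertex 0 = u ∧ p.vertex p.len = v ∧ p.IsWalk Adj := by
  rw [IsPath, ← vertex_coe, ← vertex_coe]
  refine and_congr_right' (and_congr_right' ⟨fun h i hi => ?_, fun h i => ?_⟩)
  · simpa only [← vertex_coe, Fin.val_castSucc, Fin.val_succ] using h ⟨i, hi⟩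
  · simpa only [← vertex_coe, Fin.val_castSucc, Fin.val_succ] using h i i.2

theorem pathWeight_eq_chainWeight (w : V → V → ℂ) (p : PathData V) :
    pathWeight w p = chainWeight w p.len p.vertex := by
  rw [pathWeight, chainWeight, ← Fin.prod_univ_eq_prod_range]
  refine prod_congr rfl fun i _ => ?_
  rw [← vertex_coe, ← vertex_coe]
  rfl

theorem pathWeight_ofSeq (w : V → V → ℂ) {L : ℕ} (f : ℕ → V)
    (hL : L ≤ Fintype.card V) :
    pathWeight w (ofSeq L f) = chainWeight w L f := by
  have hlen := len_ofSeq f hL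
  rw [pathWeight_eq_chainWeight, hlen]
  refine prod_congr rfl fun i hi => ?_
  rw [mem_range] at hi
  rw [vertex_ofSeq f (by omega), vertex_ofSeq f (by omega)]

def Visits (p : PathData V) (u : V) : Prop :=
  ∃ j, j ≤ p.len ∧ p.vertex j = u

def splice (p q : PathData V) (x y : ℕ) : PathData V :=
  ofSeq (x + (q.len - y)) (spliceSeq p.vertex q.vertex x y)

section splice

variable {p q : PathData V} {x y : ℕ}

theorem vertex_splice_of_le (hx : x ≤ p.len) {n : ℕ} (hn : n ≤ x) :
    (p.splice q x y).vertex n = p.vertex n := by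
  rw [splice, vertex_ofSeq _ (le_min (by omega) ((hn.trans hx).trans p.len_le_card)),
    spliceSeq_of_le hn]

theorem vertex_splice_of_lt {n : ℕ} (hxn : x < n) (hn : n ≤ (p.splice q x y).len) :
    (p.splice q x y).vertex n = q.vertex (y + n - x) := by
  rw [splice, vertex_ofSeq _ hn, spliceSeq_of_lt hxn]

theorem visits_splice {u : V} (h : (p.splice q x y).Visits u) :
    (∃ j ≤ x, p.vertex j = u) ∨ ∃ j, y < j ∧ j ≤ q.len ∧ q.vertex j = u := by
  obtain ⟨n, hn, rfl⟩ := h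
  rcases le_or_gt n x with hnx | hxn
  · refine .inl ⟨n, hnx, ?_⟩
    rw [splice, vertex_ofSeq _ hn, spliceSeq_of_le hnx]
  · have : (p.splice q x y).len ≤ x + (q.len - y) := len_ofSeq_le _ _
    exact .inr ⟨y + n - x, by omega, by omega, (vertex_splice_of_lt hxn hn).symm⟩

structure IsCrossing (Adj : V → V → Prop) (p q : PathData V) (x y : ℕ) : Prop where
  isWalk_left : p.IsWalk Adj
  isWalk_right : q.IsWalk Adj
  le_left : x ≤ p.len
  le_right : y ≤ q.len
  vertex_eq : p.vertex x = q.vertex y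

namespace IsCrossing

variable {Adj : V → V → Prop}

theorem symm (h : IsCrossing Adj p q x y) : IsCrossing Adj q p y x :=
  ⟨h.isWalk_right, h.isWalk_left, h.le_right, h.le_left, h.vertex_eq.symm⟩

theorem isAdjChain_spliceSeq (h : IsCrossing Adj p q x y) :
    IsAdjChain Adj (x + (q.len - y)) (spliceSeq p.vertex q.vertex x y) :=
  h.isWalk_left.spliceSeq h.isWalk_right h.le_left h.vertex_eq

theorem len_splice (hacyc : ∀ v, ¬ Relation.TransGen Adj v v) (h : IsCrossing Adj p q x y) :
    (p.splice q x y).len = x + (q.len - y) :=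
  len_ofSeq _ (h.isAdjChain_spliceSeq.lt_card hacyc).le

theorem isWalk_splice (hacyc : ∀ v, ¬ Relation.TransGen Adj v v) (h : IsCrossing Adj p q x y) :
    (p.splice q x y).IsWalk Adj :=
  isWalk_ofSeq (h.isAdjChain_spliceSeq.lt_card hacyc).le h.isAdjChain_spliceSeq

theorem isPath_splice (hacyc : ∀ v, ¬ Relation.TransGen Adj v v) (h : IsCrossing Adj p q x y)
    {u v u' v' : V} (hp : IsPath Adj p u v) (hq : IsPath Adj q u' v') :
    IsPath Adj (p.splice q x y) u v' := by
  rw [isPath_iff] at hp hq ⊢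
  refine ⟨?_, ?_, h.isWalk_splice hacyc⟩
  · rw [vertex_splice_of_le h.le_left (Nat.zero_le x), hp.1]
  · rw [h.len_splice hacyc, splice, vertex_ofSeq _ (h.len_splice hacyc).ge,
      spliceSeq_add_sub h.le_right h.vertex_eq, hq.2.1]

theorem isCrossing_splice (hacyc : ∀ v, ¬ Relation.TransGen Adj v v)
    (h : IsCrossing Adj p q x y) :
    IsCrossing Adj (p.splice q x y) (q.splice p y x) x y where
  isWalk_left := h.isWalk_splice hacyc
  isWalk_right := h.symm.isWalk_splice hacyc
  le_left := by rw [h.len_splice hacyc]; omega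
  le_right := by rw [h.symm.len_splice hacyc]; omega
  vertex_eq := by
    rw [vertex_splice_of_le h.le_left le_rfl, vertex_splice_of_le h.le_right le_rfl, h.vertex_eq]

theorem splice_splice (hacyc : ∀ v, ¬ Relation.TransGen Adj v v) (h : IsCrossing Adj p q x y) :
    (p.splice q x y).splice (q.splice p y x) x y = p := by
  have hlen : ((p.splice q x y).splice (q.splice p y x) x y).len = p.len := by
    rw [(h.isCrossing_splice hacyc).len_splice hacyc, h.symm.len_splice hacyc]
    have := h.le_left
    omega
  refine ext_vertex hlen fun n hn => ?_
  rcases le_or_gt n x with hnx | hxn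
  · rw [vertex_splice_of_le (h.isCrossing_splice hacyc).le_left hnx,
      vertex_splice_of_le h.le_left hnx]
  · have hn' : n ≤ p.len := hlen ▸ hn
    rw [vertex_splice_of_lt hxn hn,
      vertex_splice_of_lt (by omega) (by rw [h.symm.len_splice hacyc]; omega)]
    congr 1
    omega

theorem pathWeight_splice_mul (hacyc : ∀ v, ¬ Relation.TransGen Adj v v)
    (h : IsCrossing Adj p q x y) (w : V → V → ℂ) :
    pathWeight w (p.splice q x y) * pathWeight w (q.splice p y x) =
      pathWeight w p * pathWeight w q := by
  rw [splice, splice, pathWeight_ofSeq _ _ (h.isAdjChain_spliceSeq.lt_card hacyc).le,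
    pathWeight_ofSeq _ _ (h.symm.isAdjChain_spliceSeq.lt_card hacyc).le,
    chainWeight_spliceSeq w h.vertex_eq, chainWeight_spliceSeq w h.vertex_eq.symm,
    pathWeight_eq_chainWeight, pathWeight_eq_chainWeight, chainWeight_eq_mul w _ h.le_left,
    chainWeight_eq_mul w _ h.le_right]
  ring

end IsCrossing

end splice

end PathData

open PathData

section Families

variable [Fintype V] {Adj : V → V → Prop} {k : ℕ}

def IsPathFamily (Adj : V → V → Prop) (u v : Fin k → V) (P : Fin k → PathData V) : Prop :=
  ∀ a, IsPath Adj (P a) (u a) (v a)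

theorem IsPathFamily.isWalk {u v : Fin k → V} {P : Fin k → PathData V}
    (hP : IsPathFamily Adj u v P) (c : Fin k) : (P c).IsWalk Adj :=
  (isPath_iff.1 (hP c)).2.2

def swapTailsAt (P : Fin k → PathData V) (a b : Fin k) (x y : ℕ) : Fin k → PathData V :=
  Function.update (Function.update P a ((P a).splice (P b) x y)) b ((P b).splice (P a) y x)

variable {P : Fin k → PathData V} {a b c : Fin k} {x y : ℕ}

theorem swapTailsAt_apply_left (hab : a ≠ b) :
    swapTailsAt P a b x y a = (P a).splice (P b) x y := by
  rw [swapTailsAt, Function.update_of_ne hab, Function.update_self]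

theorem swapTailsAt_apply_right : swapTailsAt P a b x y b = (P b).splice (P a) y x :=
  Function.update_self ..

theorem swapTailsAt_apply_of_ne (ha : c ≠ a) (hb : c ≠ b) : swapTailsAt P a b x y c = P c := by
  rw [swapTailsAt, Function.update_of_ne hb, Function.update_of_ne ha]

theorem visits_swapTailsAt (hab : a ≠ b) (hx : x ≤ (P a).len) (hy : y ≤ (P b).len) {u : V}
    (h : (swapTailsAt P a b x y c).Visits u) :
    ∃ e, (P e).Visits u ∧ (e = c ∨ e = a ∨ e = b) := by
  by_cases hca : c = a
  · subst hca
    rw [swapTailsAt_apply_left hab] at h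
    rcases visits_splice h with ⟨j, hj, hv⟩ | ⟨j, -, hj, hv⟩
    · exact ⟨c, ⟨j, hj.trans hx, hv⟩, .inl rfl⟩
    · exact ⟨b, ⟨j, hj, hv⟩, .inr (.inr rfl)⟩
  by_cases hcb : c = b
  · subst hcb
    rw [swapTailsAt_apply_right] at h
    rcases visits_splice h with ⟨j, hj, hv⟩ | ⟨j, -, hj, hv⟩
    · exact ⟨c, ⟨j, hj.trans hy, hv⟩, .inl rfl⟩
    · exact ⟨a, ⟨j, hj, hv⟩, .inr (.inl rfl)⟩
  rw [swapTailsAt_apply_of_ne hca hcb] at h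
  exact ⟨c, h, .inl rfl⟩

theorem swapTailsAt_swapTailsAt (hacyc : ∀ v, ¬ Relation.TransGen Adj v v) (hab : a ≠ b)
    (h : IsCrossing Adj (P a) (P b) x y) : swapTailsAt (swapTailsAt P a b x y) a b x y = P := by
  funext c
  by_cases hca : c = a
  · subst hca
    rw [swapTailsAt_apply_left hab, swapTailsAt_apply_left hab, swapTailsAt_apply_right,
      h.splice_splice hacyc]
  by_cases hcb : c = b
  · subst hcb
    rw [swapTailsAt_apply_right, swapTailsAt_apply_left hab, swapTailsAt_apply_right,
      h.symm.splice_splice hacyc]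
  rw [swapTailsAt_apply_of_ne hca hcb, swapTailsAt_apply_of_ne hca hcb]

theorem prod_pathWeight_swapTailsAt (hacyc : ∀ v, ¬ Relation.TransGen Adj v v) (hab : a ≠ b)
    (h : IsCrossing Adj (P a) (P b) x y) (w : V → V → ℂ) :
    ∏ c, pathWeight w (swapTailsAt P a b x y c) = ∏ c, pathWeight w (P c) := by
  rw [← prod_mul_prod_compl {a, b}, ← prod_mul_prod_compl {a, b} (fun c => pathWeight w (P c)),
    prod_pair hab, prod_pair hab, swapTailsAt_apply_left hab, swapTailsAt_apply_right,
    h.pathWeight_splice_mul hacyc]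
  congr 1
  refine prod_congr rfl fun c hc => ?_
  simp only [mem_compl, mem_insert, mem_singleton, not_or] at hc
  rw [swapTailsAt_apply_of_ne hc.1 hc.2]

theorem isPathFamily_swapTailsAt (hacyc : ∀ v, ¬ Relation.TransGen Adj v v) (hab : a ≠ b)
    (h : IsCrossing Adj (P a) (P b) x y) {u v : Fin k → V} (hP : IsPathFamily Adj u v P) :
    IsPathFamily Adj u (v ∘ Equiv.swap a b) (swapTailsAt P a b x y) := by
  intro c
  by_cases hca : c = a
  · subst hca
    rw [swapTailsAt_apply_left hab, Function.comp_apply, swap_apply_left]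
    exact h.isPath_splice hacyc (hP c) (hP b)
  by_cases hcb : c = b
  · subst hcb
    rw [swapTailsAt_apply_right, Function.comp_apply, swap_apply_right]
    exact h.symm.isPath_splice hacyc (hP c) (hP a)
  rw [swapTailsAt_apply_of_ne hca hcb, Function.comp_apply, swap_apply_of_ne_of_ne hca hcb]
  exact hP c

section FirstCrossing

variable (P : Fin k → PathData V)

def CrossesAt (a : Fin k) (x : ℕ) : Prop :=
  x ≤ (P a).len ∧ ∃ b ≠ a, (P b).Visits ((P a).vertex x)

theorem not_disjointPaths_iff : ¬ DisjointPaths P ↔ ∃ a x, CrossesAt P a x := by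
  simp only [DisjointPaths, not_forall, not_not]
  constructor
  · rintro ⟨a, b, hab, x, y, hxy⟩
    exact ⟨a, x, Nat.lt_succ_iff.mp x.2, b, Ne.symm hab, y, Nat.lt_succ_iff.mp y.2,
      by rw [vertex_coe, vertex_coe, hxy]⟩
  · rintro ⟨a, x, hx, b, hba, y, hy, hxy⟩
    refine ⟨a, b, Ne.symm hba, ⟨x, Nat.lt_succ_of_le hx⟩, ⟨y, Nat.lt_succ_of_le hy⟩, ?_⟩
    rw [← vertex_coe, ← vertex_coe]
    exact hxy.symm

variable (hnd : ¬ DisjointPaths P)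

noncomputable def crossPath : Fin k :=
  (univ.filter fun a => ∃ x, CrossesAt P a x).min' <| by
    obtain ⟨a, ha⟩ := (not_disjointPaths_iff P).1 hnd
    exact ⟨a, mem_filter.2 ⟨mem_univ a, ha⟩⟩

theorem isLeast_crossPath : IsLeast {a | ∃ x, CrossesAt P a x} (crossPath P hnd) := by
  rw [show {a | ∃ x, CrossesAt P a x} = ↑(univ.filter fun a => ∃ x, CrossesAt P a x) by simp]
  exact isLeast_min' _ _

noncomputable def crossPos : ℕ :=
  Nat.find (isLeast_crossPath P hnd).1

theorem isLeast_crossPos : IsLeast {x | CrossesAt P (crossPath P hnd) x} (crossPos P hnd) :=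
  Nat.isLeast_find _

noncomputable def crossVertex : V :=
  (P (crossPath P hnd)).vertex (crossPos P hnd)

noncomputable def partnerPath : Fin k :=
  (univ.filter fun c => c ≠ crossPath P hnd ∧ (P c).Visits (crossVertex P hnd)).min' <| by
    obtain ⟨-, b, hb, hv⟩ := (isLeast_crossPos P hnd).1
    exact ⟨b, mem_filter.2 ⟨mem_univ b, hb, hv⟩⟩

theorem isLeast_partnerPath :
    IsLeast {c | c ≠ crossPath P hnd ∧ (P c).Visits (crossVertex P hnd)}
      (partnerPath P hnd) := by
  rw [show {c | c ≠ crossPath P hnd ∧ (P c).Visits (crossVertex P hnd)} =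
    ↑(univ.filter fun c => c ≠ crossPath P hnd ∧ (P c).Visits (crossVertex P hnd)) by simp]
  exact isLeast_min' _ _

noncomputable def partnerPos : ℕ :=
  Nat.find (isLeast_partnerPath P hnd).1.2

theorem isLeast_partnerPos :
    IsLeast {j | j ≤ (P (partnerPath P hnd)).len ∧
      (P (partnerPath P hnd)).vertex j = crossVertex P hnd} (partnerPos P hnd) :=
  Nat.isLeast_find _

theorem crossPath_ne_partnerPath : crossPath P hnd ≠ partnerPath P hnd :=
  (isLeast_partnerPath P hnd).1.1.symm

theorem crossPath_le_partnerPath : crossPath P hnd ≤ partnerPath P hnd :=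
  (isLeast_crossPath P hnd).2 ⟨partnerPos P hnd, (isLeast_partnerPos P hnd).1.1, crossPath P hnd,
    crossPath_ne_partnerPath P hnd, crossPos P hnd, (isLeast_crossPos P hnd).1.1,
    (isLeast_partnerPos P hnd).1.2.symm⟩

theorem isCrossing_crossPath (hG : ∀ c, (P c).IsWalk Adj) :
    IsCrossing Adj (P (crossPath P hnd)) (P (partnerPath P hnd)) (crossPos P hnd)
      (partnerPos P hnd) :=
  ⟨hG _, hG _, (isLeast_crossPos P hnd).1.1, (isLeast_partnerPos P hnd).1.1,
    (isLeast_partnerPos P hnd).1.2.symm⟩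

noncomputable def swapTails : Fin k → PathData V :=
  swapTailsAt P (crossPath P hnd) (partnerPath P hnd) (crossPos P hnd) (partnerPos P hnd)

end FirstCrossing


section SwapTails

variable (P : Fin k → PathData V) (hnd : ¬ DisjointPaths P)

theorem crossesAt_swapTails (hacyc : ∀ v, ¬ Relation.TransGen Adj v v)
    (hG : ∀ c, (P c).IsWalk Adj) :
    CrossesAt (swapTails P hnd) (crossPath P hnd) (crossPos P hnd) := by
  have h := isCrossing_crossPath P hnd hG
  have hab := crossPath_ne_partnerPath P hnd
  unfold swapTails
  refine ⟨?_, partnerPath P hnd, hab.symm, partnerPos P hnd, ?_, ?_⟩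
  · rw [swapTailsAt_apply_left hab, h.len_splice hacyc]
    omega
  · rw [swapTailsAt_apply_right, h.symm.len_splice hacyc]
    omega
  · rw [swapTailsAt_apply_right, swapTailsAt_apply_left hab, vertex_splice_of_le h.le_right le_rfl,
      vertex_splice_of_le h.le_left le_rfl, h.vertex_eq]

theorem not_disjointPaths_swapTails (hacyc : ∀ v, ¬ Relation.TransGen Adj v v)
    (hG : ∀ c, (P c).IsWalk Adj) : ¬ DisjointPaths (swapTails P hnd) :=
  (not_disjointPaths_iff _).2 ⟨_, _, crossesAt_swapTails P hnd hacyc hG⟩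

variable (hnd' : ¬ DisjointPaths (swapTails P hnd))

theorem crossPath_swapTails (hacyc : ∀ v, ¬ Relation.TransGen Adj v v)
    (hG : ∀ c, (P c).IsWalk Adj) : crossPath (swapTails P hnd) hnd' = crossPath P hnd := by
  have h := isCrossing_crossPath P hnd hG
  refine (isLeast_crossPath _ hnd').unique ⟨⟨_, crossesAt_swapTails P hnd hacyc hG⟩, ?_⟩
  rintro c ⟨m, hm, d, hdc, hvis⟩
  by_contra! hlt
  have hca : c ≠ crossPath P hnd := hlt.ne
  have hcb : c ≠ partnerPath P hnd := (hlt.trans_le (crossPath_le_partnerPath P hnd)).ne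
  unfold swapTails at hm hvis
  rw [swapTailsAt_apply_of_ne hca hcb] at hm hvis
  obtain ⟨e, he, hed⟩ :=
    visits_swapTailsAt (crossPath_ne_partnerPath P hnd) h.le_left h.le_right hvis
  have hec : e ≠ c := by
    rcases hed with rfl | rfl | rfl
    exacts [hdc, hca.symm, hcb.symm]
  exact hlt.not_ge ((isLeast_crossPath P hnd).2 ⟨m, hm, e, hec, he⟩)

theorem crossPos_swapTails (hacyc : ∀ v, ¬ Relation.TransGen Adj v v)
    (hG : ∀ c, (P c).IsWalk Adj) : crossPos (swapTails P hnd) hnd' = crossPos P hnd := by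
  have h := isCrossing_crossPath P hnd hG
  have hab := crossPath_ne_partnerPath P hnd
  refine (isLeast_crossPos _ hnd').unique ?_
  rw [crossPath_swapTails P hnd hnd' hacyc hG]
  refine ⟨crossesAt_swapTails P hnd hacyc hG, ?_⟩
  rintro m ⟨-, d, hda, hvis⟩
  by_contra! hlt
  have hcross : ¬ CrossesAt P (crossPath P hnd) m :=
    fun hc => hlt.not_ge ((isLeast_crossPos P hnd).2 hc)
  unfold swapTails at hvis
  rw [swapTailsAt_apply_left hab, vertex_splice_of_le h.le_left hlt.le] at hvis
  by_cases hdb : d = partnerPath P hnd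
  · subst hdb
    rw [swapTailsAt_apply_right] at hvis
    rcases visits_splice hvis with ⟨j, hj, hv⟩ | ⟨j, hxj, hj, hv⟩
    · exact hcross ⟨hlt.le.trans h.le_left, _, hda, j, hj.trans h.le_right, hv⟩
    · have := IsAdjChain.injOn hacyc h.isWalk_left hj (hlt.le.trans h.le_left) hv
      omega
  · rw [swapTailsAt_apply_of_ne hda hdb] at hvis
    exact hcross ⟨hlt.le.trans h.le_left, d, hda, hvis⟩

theorem crossVertex_swapTails (hacyc : ∀ v, ¬ Relation.TransGen Adj v v)
    (hG : ∀ c, (P c).IsWalk Adj) : crossVertex (swapTails P hnd) hnd' = crossVertex P hnd := by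
  rw [crossVertex, crossPath_swapTails P hnd hnd' hacyc hG, crossPos_swapTails P hnd hnd' hacyc hG,
    swapTails, swapTailsAt_apply_left (crossPath_ne_partnerPath P hnd),
    vertex_splice_of_le (isCrossing_crossPath P hnd hG).le_left le_rfl, crossVertex]

theorem partnerPath_swapTails (hacyc : ∀ v, ¬ Relation.TransGen Adj v v)
    (hG : ∀ c, (P c).IsWalk Adj) : partnerPath (swapTails P hnd) hnd' = partnerPath P hnd := by
  have h := isCrossing_crossPath P hnd hG
  refine (isLeast_partnerPath _ hnd').unique ?_
  rw [crossPath_swapTails P hnd hnd' hacyc hG, crossVertex_swapTails P hnd hnd' hacyc hG]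
  unfold swapTails
  refine ⟨⟨(crossPath_ne_partnerPath P hnd).symm, partnerPos P hnd, ?_, ?_⟩, ?_⟩
  · rw [swapTailsAt_apply_right, h.symm.len_splice hacyc]
    omega
  · rw [swapTailsAt_apply_right, vertex_splice_of_le h.le_right le_rfl]
    exact (isLeast_partnerPos P hnd).1.2
  · rintro c ⟨hca, hvis⟩
    by_cases hcb : c = partnerPath P hnd
    · exact hcb.ge
    · rw [swapTailsAt_apply_of_ne hca hcb] at hvis
      exact (isLeast_partnerPath P hnd).2 ⟨hca, hvis⟩

theorem partnerPos_swapTails (hacyc : ∀ v, ¬ Relation.TransGen Adj v v)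
    (hG : ∀ c, (P c).IsWalk Adj) : partnerPos (swapTails P hnd) hnd' = partnerPos P hnd := by
  have h := isCrossing_crossPath P hnd hG
  refine (isLeast_partnerPos _ hnd').unique ?_
  rw [partnerPath_swapTails P hnd hnd' hacyc hG, crossVertex_swapTails P hnd hnd' hacyc hG]
  unfold swapTails
  rw [swapTailsAt_apply_right]
  refine ⟨⟨by rw [h.symm.len_splice hacyc]; omega, ?_⟩, ?_⟩
  · rw [vertex_splice_of_le h.le_right le_rfl]
    exact (isLeast_partnerPos P hnd).1.2
  · rintro j ⟨-, hv⟩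
    by_contra! hlt
    rw [vertex_splice_of_le h.le_right hlt.le] at hv
    exact hlt.not_ge ((isLeast_partnerPos P hnd).2 ⟨hlt.le.trans h.le_right, hv⟩)

theorem swapTails_swapTails (hacyc : ∀ v, ¬ Relation.TransGen Adj v v)
    (hG : ∀ c, (P c).IsWalk Adj) : swapTails (swapTails P hnd) hnd' = P := by
  change swapTailsAt (swapTails P hnd) (crossPath _ hnd') (partnerPath _ hnd') (crossPos _ hnd')
    (partnerPos _ hnd') = P
  rw [crossPath_swapTails P hnd hnd' hacyc hG, partnerPath_swapTails P hnd hnd' hacyc hG,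
    crossPos_swapTails P hnd hnd' hacyc hG, partnerPos_swapTails P hnd hnd' hacyc hG]
  exact swapTailsAt_swapTailsAt hacyc (crossPath_ne_partnerPath P hnd)
    (isCrossing_crossPath P hnd hG)

end SwapTails

end Families

section Determinant

variable [Fintype V] {Adj : V → V → Prop} {k : ℕ}

theorem sum_sign_mul_prod_pathWeight_not_disjoint_eq_zero
    (hacyc : ∀ v, ¬ Relation.TransGen Adj v v) (w : V → V → ℂ) (u v : Fin k → V) :
    ∑ σ : Perm (Fin k), ∑ P : Fin k → PathData V,
      (if IsPathFamily Adj u (v ∘ σ) P ∧ ¬ DisjointPaths P then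
        ((Perm.sign σ : ℤ) : ℂ) * ∏ a, pathWeight w (P a) else 0) = 0 := by
  rw [← Fintype.sum_prod_type', ← sum_filter]
  refine sum_involution (fun z hz => (z.1 * swap (crossPath z.2 (mem_filter.1 hz).2.2)
      (partnerPath z.2 (mem_filter.1 hz).2.2), swapTails z.2 (mem_filter.1 hz).2.2))
    ?_ ?_ ?_ ?_
  · rintro ⟨σ, P⟩ hz
    obtain ⟨hP, hnd⟩ := (mem_filter.1 hz).2
    dsimp only
    rw [swapTails, prod_pathWeight_swapTailsAt hacyc (crossPath_ne_partnerPath P hnd)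
        (isCrossing_crossPath P hnd hP.isWalk), Perm.sign_mul,
      Perm.sign_swap (crossPath_ne_partnerPath P hnd)]
    push_cast
    ring
  · rintro ⟨σ, P⟩ hz - h
    have := congrArg Prod.fst h
    simp only [mul_eq_left, swap_eq_one_iff] at this
    exact crossPath_ne_partnerPath P _ this
  · rintro ⟨σ, P⟩ hz
    obtain ⟨hP, hnd⟩ := (mem_filter.1 hz).2
    refine mem_filter.2 ⟨mem_univ _, ?_, not_disjointPaths_swapTails P hnd hacyc hP.isWalk⟩
    rw [Perm.coe_mul, ← Function.comp_assoc]
    exact isPathFamily_swapTailsAt hacyc (crossPath_ne_partnerPath P hnd)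
      (isCrossing_crossPath P hnd hP.isWalk) hP
  · rintro ⟨σ, P⟩ hz
    obtain ⟨hP, hnd⟩ := (mem_filter.1 hz).2
    refine Prod.ext ?_ (swapTails_swapTails P hnd _ hacyc hP.isWalk)
    dsimp only
    rw [crossPath_swapTails P hnd _ hacyc hP.isWalk, partnerPath_swapTails P hnd _ hacyc hP.isWalk,
      mul_assoc, swap_mul_self, mul_one]

theorem Matrix.det_of_sum {n β R : Type*} [Fintype n] [DecidableEq n] [Fintype β] [CommRing R]
    (f : n → n → β → R) :
    (Matrix.of fun i j => ∑ p, f i j p).det =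
      ∑ σ : Perm n, ∑ P : n → β, ((Perm.sign σ : ℤ) : R) * ∏ i, f i (σ i) (P i) := by
  rw [← Matrix.det_transpose, Matrix.det_apply']
  refine sum_congr rfl fun σ _ => ?_
  rw [← mul_sum, ← Fintype.prod_sum]
  rfl

theorem det_pathMatrix (w : V → V → ℂ) (u v : Fin k → V) :
    (pathMatrix Adj w u v).det =
      ∑ σ : Perm (Fin k), ∑ P : Fin k → PathData V,
        if IsPathFamily Adj u (v ∘ σ) P then
          ((Perm.sign σ : ℤ) : ℂ) * ∏ a, pathWeight w (P a) else 0 := by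
  rw [show pathMatrix Adj w u v = Matrix.of fun i j =>
      ∑ p, if IsPath Adj p (u i) (v j) then pathWeight w p else 0 from rfl, Matrix.det_of_sum]
  simp only [Fintype.prod_ite_zero, mul_ite, mul_zero]
  congr!

theorem det_pathMatrix_eq_sum_disjoint (hacyc : ∀ v, ¬ Relation.TransGen Adj v v)
    (w : V → V → ℂ) (u v : Fin k → V) :
    (pathMatrix Adj w u v).det =
      ∑ σ : Perm (Fin k), ∑ P : Fin k → PathData V,
        if IsPathFamily Adj u (v ∘ σ) P ∧ DisjointPaths P then
          ((Perm.sign σ : ℤ) : ℂ) * ∏ a, pathWeight w (P a) else 0 := by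
  rw [det_pathMatrix, ← sub_eq_zero, ← sum_sub_distrib]
  refine (sum_congr rfl fun σ _ => ?_).trans
    (sum_sign_mul_prod_pathWeight_not_disjoint_eq_zero hacyc w u v)
  rw [← sum_sub_distrib]
  refine sum_congr rfl fun P _ => ?_
  by_cases hD : DisjointPaths P <;> simp [hD]

end Determinant

end

theorem lindstrom_gessel_viennot_general {V : Type*} [Fintype V] (Adj : V → V → Prop)
    (hacyc : ∀ v : V, ¬ Relation.TransGen Adj v v)
    (w : V → V → ℂ) (m kk : ℕ) (s t : Fin m → V)
    (I J : Fin kk → Fin m)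
    (hplanar : ∀ (τ : Equiv.Perm (Fin kk)) (P : Fin kk → PathData V),
      (∀ a, IsPath Adj (P a) (s (I a)) (t (J (τ a)))) → DisjointPaths P → τ = 1) :
    ((pathMatrix Adj w s t).submatrix I J).det =
      ∑ P : Fin kk → PathData V,
        if (∀ a, IsPath Adj (P a) (s (I a)) (t (J a))) ∧ DisjointPaths P
        then ∏ a, pathWeight w (P a) else 0 := by
  rw [show (pathMatrix Adj w s t).submatrix I J = pathMatrix Adj w (s ∘ I) (t ∘ J) from rfl,
    det_pathMatrix_eq_sum_disjoint hacyc, sum_eq_single (1 : Perm (Fin kk))]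
  · simp [IsPathFamily]
  · exact fun σ _ hσ => sum_eq_zero fun P _ => if_neg fun hP => hσ (hplanar σ P hP.1 hP.2)
  · simp

/-- Lindström–Gessel–Viennot lemma: let `Adj` be an acyclic adjacency
relation on a finite vertex set `V`, with complex edge weights `w`, sources `s` and sinks
`t`. Let `I = {i₁ < ⋯ < i_k}` and `J = {j₁ < ⋯ < j_k}` index sources and sinks, and
assume (the consequence of planarity with boundary order `s₁,…,s_m,t_m,…,t₁`) that any
vertex-disjoint tuple of paths from the sources indexed by `I` to the sinks indexed by
`J` connects `s_{i_ℓ}` to `t_{j_ℓ}` (the connecting permutation is the identity). Then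
`det(P[I,J]) = ∑_Π w(Π)`, a sum over vertex-disjoint tuples of paths
`Π : (s_{i₁},…,s_{i_k}) → (t_{j₁},…,t_{j_k})`, where `P` is the path matrix. -/
theorem lindstrom_gessel_viennot {V : Type*} [Fintype V] (Adj : V → V → Prop)
    (hacyc : ∀ v : V, ¬ Relation.TransGen Adj v v)
    (w : V → V → ℂ) (m kk : ℕ) (s t : Fin m → V)
    (I J : Fin kk → Fin m) (hI : StrictMono I) (hJ : StrictMono J)
    (hplanar : ∀ (τ : Equiv.Perm (Fin kk)) (P : Fin kk → PathData V),
      (∀ a, IsPath Adj (P a) (s (I a)) (t (J (τ a)))) → DisjointPaths P → τ = 1) :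
    ((pathMatrix Adj w s t).submatrix I J).det =
      ∑ P : Fin kk → PathData V,
        if (∀ a, IsPath Adj (P a) (s (I a)) (t (J a))) ∧ DisjointPaths P
        then ∏ a, pathWeight w (P a) else 0 :=
  lindstrom_gessel_viennot_general Adj hacyc w m kk s t I J hplanar
end
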